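/- Let f, k : ℝ → ℝ be smooth functions such that |f(x) + k(y)| < π/4 for all (x,y) ∈ ℝ², and define α : ℝ² → ℝ by α(x,y) = 2·artanh( tan(f(x) + k(y)) ). Then α satisfies the partial differential equation ∂²α/∂x∂y = (∂α/∂x)·(∂α/∂y)·tanh(α) at every point of ℝ². -/

import Mathlib

/-- The inverse hyperbolic tangent `artanh t = (1/2)·log((1+t)/(1−t))`,
defined for `t ∈ (−1, 1)`. -/
noncomputable def artanh (t : ℝ) : ℝ := (1 / 2) * Real.log ((1 + t) / (1 - t))

open Real in
lemma pde_facts {v : ℝ} (h : |v| < π / 4) :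
    0 < Real.cos v ∧ Real.tan v < 1 ∧ -1 < Real.tan v ∧ 0 < Real.cos (2 * v) := by
  have hp := Real.pi_pos
  obtain ⟨ha, hb⟩ := abs_lt.1 h
  have h1 : -(π/2) < v := by linarith
  have h2 : v < π/2 := by linarith
  have hc : 0 < Real.cos v := Real.cos_pos_of_mem_Ioo ⟨h1, h2⟩
  have ht1 : Real.tan v < 1 := by
    have := Real.tan_lt_tan_of_lt_of_lt_pi_div_two h1 (by linarith : π/4 < π/2) hb
    simpa [Real.tan_pi_div_four] using this
  have ht2 : -1 < Real.tan v := by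
    have := Real.tan_lt_tan_of_lt_of_lt_pi_div_two (x := -(π/4)) (by linarith) h2 (by linarith)
    simpa [Real.tan_pi_div_four] using this
  have hc2 : 0 < Real.cos (2*v) := Real.cos_pos_of_mem_Ioo ⟨by linarith, by linarith⟩
  exact ⟨hc, ht1, ht2, hc2⟩

open Real in
lemma pde_hasDerivAt_G {v : ℝ} (h : |v| < π / 4) :
    HasDerivAt (fun w => Real.log ((1 + Real.tan w) / (1 - Real.tan w)))
      (2 / Real.cos (2 * v)) v := by
  obtain ⟨hc, ht1, ht2, hc2⟩ := pde_facts h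
  have htd : HasDerivAt Real.tan (1 / Real.cos v ^ 2) v := Real.hasDerivAt_tan hc.ne'
  have hp : HasDerivAt (fun w => 1 + Real.tan w) (1 / Real.cos v ^ 2) v := by
    exact htd.const_add 1
  have hq : HasDerivAt (fun w => 1 - Real.tan w) (-(1 / Real.cos v ^ 2)) v := by
    exact htd.const_sub 1
  have hq0 : (1 : ℝ) - Real.tan v ≠ 0 := by linarith
  have hp0 : (1 : ℝ) + Real.tan v ≠ 0 := by linarith
  have hlog := (hp.div hq hq0).log (div_ne_zero hp0 hq0)
  convert hlog using 1
  · rfl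
  simp only [Pi.div_apply]
  have hcv : Real.cos v ≠ 0 := hc.ne'
  rw [Real.tan_eq_sin_div_cos] at *
  have hcs : Real.cos v - Real.sin v > 0 := by rw [div_lt_one hc] at ht1; linarith
  have hcs2 : Real.cos v + Real.sin v > 0 := by rw [lt_div_iff₀ hc] at ht2; linarith
  have h2v : Real.cos (2*v) = (Real.cos v - Real.sin v) * (Real.cos v + Real.sin v) := by
    rw [Real.cos_two_mul']; ring
  rw [h2v]
  field_simp
  ring_nf

open Real in
lemma pde_hasDerivAt_H {v : ℝ} (h : |v| < π / 4) :
    HasDerivAt (fun w => 2 / Real.cos (2 * w))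
      (4 * Real.sin (2 * v) / Real.cos (2 * v) ^ 2) v := by
  obtain ⟨hc, ht1, ht2, hc2⟩ := pde_facts h
  have hcos : HasDerivAt (fun w => Real.cos (2 * w)) (-Real.sin (2 * v) * 2) v := by
    have hlin : HasDerivAt (fun w : ℝ => 2 * w) 2 v := by
      simpa using (hasDerivAt_id v).const_mul (2:ℝ)
    exact (Real.hasDerivAt_cos (2 * v)).comp v hlin
  have := (hasDerivAt_const v (2:ℝ)).div hcos hc2.ne'
  exact this.congr_deriv (by ring)

open Real in
lemma pde_tanh_eq {v : ℝ} (h : |v| < π / 4) :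
    Real.tanh (2 * _root_.artanh (Real.tan v)) = Real.sin (2 * v) := by
  obtain ⟨hc, ht1, ht2, _⟩ := pde_facts h
  have harg : 2 * _root_.artanh (Real.tan v)
      = Real.log ((1 + Real.tan v) / (1 - Real.tan v)) := by
    unfold _root_.artanh; ring
  rw [harg]
  have hA : 0 < (1 + Real.tan v) / (1 - Real.tan v) :=
    div_pos (by linarith) (by linarith)
  rw [Real.tanh_eq_sinh_div_cosh, Real.sinh_log hA, Real.cosh_log hA, Real.sin_two_mul,
    Real.tan_eq_sin_div_cos] at *
  have hcv : Real.cos v ≠ 0 := hc.ne'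
  have hcs : Real.cos v - Real.sin v > 0 := by rw [div_lt_one hc] at ht1; linarith
  have hcs2 : Real.cos v + Real.sin v > 0 := by rw [lt_div_iff₀ hc] at ht2; linarith
  have h1 : (1:ℝ) - Real.sin v / Real.cos v ≠ 0 := by
    have : (1:ℝ) - Real.sin v / Real.cos v = (Real.cos v - Real.sin v) / Real.cos v := by
      field_simp
    rw [this]; positivity
  have key : (1 + Real.sin v / Real.cos v) / (1 - Real.sin v / Real.cos v)
      = (Real.cos v + Real.sin v) / (Real.cos v - Real.sin v) := by
    rw [div_eq_div_iff h1 hcs.ne']; field_simp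
  rw [key, inv_div]
  have pyth := Real.sin_sq_add_cos_sq v
  field_simp
  nlinarith [pyth, sq_nonneg (Real.sin v), sq_nonneg (Real.cos v)]

lemma pde_fun_eq (g : ℝ → ℝ) :
    (fun t => 2 * artanh (Real.tan (g t)))
      = fun t => Real.log ((1 + Real.tan (g t)) / (1 - Real.tan (g t))) := by
  funext t; unfold artanh; ring

/-- Verification of the general solution (5.37) of the PDE (5.36)
`α_{xy} = α_x · α_y · tanh α` arising in Case (C) of the proof of
Theorem 5.1: `α(x,y) = 2·artanh(tan(f x + k y))`; the hypothesis
`|f x + k y| < π/4` ensures `tan(f x + k y) ∈ (−1, 1)`. -/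
theorem solution_of_pde_5_36 (f k : ℝ → ℝ)
    (hf : ContDiff ℝ (⊤ : ℕ∞) f) (hk : ContDiff ℝ (⊤ : ℕ∞) k)
    (hbound : ∀ x y : ℝ, |f x + k y| < Real.pi / 4) :
    ∀ x y : ℝ,
      deriv (fun s => deriv (fun t =>
          2 * artanh (Real.tan (f s + k t))) y) x
        = deriv (fun t => 2 * artanh (Real.tan (f t + k y))) x
            * deriv (fun t => 2 * artanh (Real.tan (f x + k t))) y
            * Real.tanh (2 * artanh (Real.tan (f x + k y))) := by
  intro x y
  have hfd : Differentiable ℝ f := hf.differentiable (by simp)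
  have hkd : Differentiable ℝ k := hk.differentiable (by simp)
  -- inner derivative in t (for any s)
  have inner : ∀ s, deriv (fun t => 2 * artanh (Real.tan (f s + k t))) y
      = deriv k y * (2 / Real.cos (2 * (f s + k y))) := by
    intro s
    have hin : HasDerivAt (fun t => f s + k t) (deriv k y) y :=
      ((hkd y).hasDerivAt).const_add (f s)
    have h1 : HasDerivAt (fun t => Real.log ((1 + Real.tan (f s + k t)) / (1 - Real.tan (f s + k t))))
        (2 / Real.cos (2 * (f s + k y)) * deriv k y) y := by
      exact (pde_hasDerivAt_G (hbound s y)).comp y hin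
    rw [pde_fun_eq (fun t => f s + k t)]
    rw [h1.deriv]; ring
  -- derivative in x of the α itself (for any x)
  have dx : deriv (fun t => 2 * artanh (Real.tan (f t + k y))) x
      = deriv f x * (2 / Real.cos (2 * (f x + k y))) := by
    have hin : HasDerivAt (fun t => f t + k y) (deriv f x) x :=
      ((hfd x).hasDerivAt).add_const (k y)
    have h1 : HasDerivAt (fun t => Real.log ((1 + Real.tan (f t + k y)) / (1 - Real.tan (f t + k y))))
        (2 / Real.cos (2 * (f x + k y)) * deriv f x) x := by
      exact (pde_hasDerivAt_G (hbound x y)).comp x hin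
    rw [pde_fun_eq (fun t => f t + k y)]
    rw [h1.deriv]; ring
  -- outer derivative
  have houter : (fun s => deriv (fun t => 2 * artanh (Real.tan (f s + k t))) y)
      = fun s => deriv k y * (2 / Real.cos (2 * (f s + k y))) := by
    funext s; exact inner s
  rw [houter, dx, inner x]
  have hin : HasDerivAt (fun s => f s + k y) (deriv f x) x :=
    ((hfd x).hasDerivAt).add_const (k y)
  have h2 : HasDerivAt (fun s => deriv k y * (2 / Real.cos (2 * (f s + k y))))
      (deriv k y * (4 * Real.sin (2 * (f x + k y)) / Real.cos (2 * (f x + k y)) ^ 2 * deriv f x)) x := by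
    simpa [Function.comp] using ((pde_hasDerivAt_H (hbound x y)).comp x hin).const_mul (deriv k y)
  rw [h2.deriv, pde_tanh_eq (hbound x y)]
  obtain ⟨_, _, _, hc2⟩ := pde_facts (hbound x y)
  have hC : Real.cos (2 * (f x + k y)) ≠ 0 := hc2.ne'
  field_simp
  ring
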